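/- Let w_1, w_2 > 0 with 4w_1 ≥ 3w_2, and define α*_1 = (−4w_1 + 3w_2 + 2√(w_1(4w_1−3w_2)))/(3w_2) and α*_2 = (2w_1 − √(w_1(4w_1−3w_2)))/(3w_2). Then (α*_1, α*_2) is a critical point of the two-round durable-good revenue G̃(α_1,α_2) = α_1(1−α_1)w_1 + α_2(1−α_1−α_2)w_2(1−α_1); that is, ∂G̃/∂α_1(α*_1,α*_2) = 0 and ∂G̃/∂α_2(α*_1,α*_2) = 0. -/

import Mathlib

/-! `α₁* + 2α₂* = 1` makes the second-round share optimal given the first, and on that line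
`∂G̃/∂α₁` is minus the quadratic `3w₂x² − 4w₁x + w₁` at `x = α₂*`, of which `α₂*` is the smaller
root, real because `4w₁ ≥ 3w₂`. -/

/-- Two-round durable-good revenue
`G̃(α₁,α₂) = α₁(1−α₁)w₁ + α₂(1−(α₁+α₂))w₂(1−α₁)` (initial stock `y₀ = 1`). -/
noncomputable def twoRoundRevenue (w₁ w₂ a₁ a₂ : ℝ) : ℝ :=
  a₁ * (1 - a₁) * w₁ + a₂ * (1 - (a₁ + a₂)) * w₂ * (1 - a₁)

/-- The interior critical first-round share
`α₁* = (−4w₁ + 3w₂ + 2√(w₁(4w₁−3w₂)))/(3w₂)`. -/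
noncomputable def alpha1Star (w₁ w₂ : ℝ) : ℝ :=
  (-4 * w₁ + 3 * w₂ + 2 * Real.sqrt (w₁ * (4 * w₁ - 3 * w₂))) / (3 * w₂)

/-- The interior critical second-round share
`α₂* = (2w₁ − √(w₁(4w₁−3w₂)))/(3w₂)`. -/
noncomputable def alpha2Star (w₁ w₂ : ℝ) : ℝ :=
  (2 * w₁ - Real.sqrt (w₁ * (4 * w₁ - 3 * w₂))) / (3 * w₂)

section Revenue

variable (w₁ w₂ a₁ a₂ : ℝ)

theorem hasDerivAt_twoRoundRevenue_fst :
    HasDerivAt (fun x => twoRoundRevenue w₁ w₂ x a₂)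
      ((1 - 2 * a₁) * w₁ + a₂ * w₂ * (2 * a₁ + a₂ - 2)) a₁ := by
  have hid := hasDerivAt_id' a₁
  have := ((hid.mul (hid.const_sub 1)).mul_const w₁).add
    (((((hid.add_const a₂).const_sub 1).const_mul a₂).mul_const w₂).mul (hid.const_sub 1))
  exact this.congr_deriv (by ring)

theorem hasDerivAt_twoRoundRevenue_snd :
    HasDerivAt (fun x => twoRoundRevenue w₁ w₂ a₁ x) ((1 - a₁ - 2 * a₂) * w₂ * (1 - a₁)) a₂ := by
  have hid := hasDerivAt_id' a₂
  have := (hasDerivAt_const a₂ (a₁ * (1 - a₁) * w₁)).add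
    (((hid.mul ((hid.const_add a₁).const_sub 1)).mul_const w₂).mul_const (1 - a₁))
  exact this.congr_deriv (by ring)

theorem twoRoundRevenue_critical_of_quadratic (hsum : a₁ + 2 * a₂ = 1)
    (hroot : 3 * w₂ * a₂ ^ 2 - 4 * w₁ * a₂ + w₁ = 0) :
    HasDerivAt (fun x => twoRoundRevenue w₁ w₂ x a₂) 0 a₁ ∧
      HasDerivAt (fun x => twoRoundRevenue w₁ w₂ a₁ x) 0 a₂ := by
  constructor
  · refine (hasDerivAt_twoRoundRevenue_fst w₁ w₂ a₁ a₂).congr_deriv ?_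
    linear_combination (2 * a₂ * w₂ - 2 * w₁) * hsum - hroot
  · refine (hasDerivAt_twoRoundRevenue_snd w₁ w₂ a₁ a₂).congr_deriv ?_
    linear_combination -(w₂ * (1 - a₁)) * hsum

end Revenue

theorem alpha1Star_add_two_mul_alpha2Star {w₁ w₂ : ℝ} (hw₂ : w₂ ≠ 0) :
    alpha1Star w₁ w₂ + 2 * alpha2Star w₁ w₂ = 1 := by
  unfold alpha1Star alpha2Star
  field_simp
  ring

theorem alpha2Star_quadratic_eq_zero {w₁ w₂ : ℝ} (hw₂ : w₂ ≠ 0)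
    (hdisc : 0 ≤ w₁ * (4 * w₁ - 3 * w₂)) :
    3 * w₂ * alpha2Star w₁ w₂ ^ 2 - 4 * w₁ * alpha2Star w₁ w₂ + w₁ = 0 := by
  set s := Real.sqrt (w₁ * (4 * w₁ - 3 * w₂))
  have hdiscrim : discrim (3 * w₂) (-4 * w₁) w₁ = (2 * s) * (2 * s) := by
    rw [discrim, mul_mul_mul_comm, Real.mul_self_sqrt hdisc]
    ring
  have hroot := (quadratic_eq_zero_iff (by positivity) hdiscrim (alpha2Star w₁ w₂)).2 <| by
    right
    change (2 * w₁ - s) / (3 * w₂) = _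
    field_simp
    ring
  linear_combination hroot

theorem two_round_interior_critical_point_general
    (w₁ w₂ : ℝ) (h₂ : 0 < w₂) (h : 3 * w₂ ≤ 4 * w₁) :
    HasDerivAt (fun x : ℝ => twoRoundRevenue w₁ w₂ x (alpha2Star w₁ w₂)) 0
        (alpha1Star w₁ w₂) ∧
      HasDerivAt (fun x : ℝ => twoRoundRevenue w₁ w₂ (alpha1Star w₁ w₂) x) 0
        (alpha2Star w₁ w₂) := by
  have hdisc : 0 ≤ w₁ * (4 * w₁ - 3 * w₂) :=
    mul_nonneg (by linarith) (by linarith)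
  exact twoRoundRevenue_critical_of_quadratic _ _ _ _
    (alpha1Star_add_two_mul_alpha2Star h₂.ne') (alpha2Star_quadratic_eq_zero h₂.ne' hdisc)

/-- interior solution of the `N = 2` first-order system.
`(α₁*, α₂*)` is a critical point of the two-round durable-good revenue. -/
theorem two_round_interior_critical_point
    (w₁ w₂ : ℝ) (h₁ : 0 < w₁) (h₂ : 0 < w₂) (h : 3 * w₂ ≤ 4 * w₁) :
    HasDerivAt (fun x : ℝ => twoRoundRevenue w₁ w₂ x (alpha2Star w₁ w₂)) 0
        (alpha1Star w₁ w₂) ∧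
      HasDerivAt (fun x : ℝ => twoRoundRevenue w₁ w₂ (alpha1Star w₁ w₂) x) 0
        (alpha2Star w₁ w₂) :=
  two_round_interior_critical_point_general w₁ w₂ h₂ h
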